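/- arXiv:2402.08271 — 3 statements merged into one kernel-verified Lean document; each statement's English description precedes it below -/
import Mathlib

section
/- Let F and G be two σ-fields, Y an F-measurable random variable, and X, X̄ random variables with X equal in law to X̄ and X̄ independent of F. Suppose that φ(X,Y) has the same conditional law given F as φ(X̄,Y) and that φ(X,Y) is conditionally independent of G given F. Let H = σ(F ∪ G). Then there exists a random variable X̃ (on a possibly enlarged probability space) with X̃ equal in law to X, X̃ independent of H, and φ(X,Y) having the same conditional law given H as φ(X̃,Y). -/
/-!
Let `ν` be the law of `X` and `g y = ∫ 1_A (φ x y) dν(x)`. Since `X̄` is independent of `F` and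
`Y` is `F`-measurable, freezing `Y` gives `E[1_A(φ(X̄,Y)) | F] = g(Y)`; by the conditional-law
hypothesis the same holds for `X`, and conditional independence of `φ(X,Y)` and `G` given `F`
(tested on the π-system of sets `s ∩ t`, `s ∈ F`, `t ∈ G`) upgrades it to
`E[1_A(φ(X,Y)) | F ⊔ G] = g(Y)`. On `Ω × β` with the measure `μ ⊗ ν`, the second coordinate `X̃`
is a copy of `X` independent of the pulled-back `F ⊔ G`, so freezing once more gives
`E[1_A(φ(X̃,Y)) | F ⊔ G] = g(Y)` as well.
-/

open MeasureTheory ProbabilityTheory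

lemma IsPiSystem.image2_inter {α : Type*} {S T : Set (Set α)} (hS : IsPiSystem S)
    (hT : IsPiSystem T) : IsPiSystem (Set.image2 (· ∩ ·) S T) := by
  rintro _ ⟨s₁, hs₁, t₁, ht₁, rfl⟩ _ ⟨s₂, hs₂, t₂, ht₂, rfl⟩ hne
  have hinter : s₁ ∩ t₁ ∩ (s₂ ∩ t₂) = s₁ ∩ s₂ ∩ (t₁ ∩ t₂) := Set.inter_inter_inter_comm _ _ _ _
  rw [hinter] at hne ⊢
  exact ⟨_, hS _ hs₁ _ hs₂ hne.left, _, hT _ ht₁ _ ht₂ hne.right, rfl⟩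

lemma MeasurableSpace.sup_eq_generateFrom_image2_inter {Ω : Type*} (F G : MeasurableSpace Ω) :
    F ⊔ G = generateFrom
      (Set.image2 (· ∩ ·) {s | MeasurableSet[F] s} {t | MeasurableSet[G] t}) := by
  refine le_antisymm (sup_le (fun s hs => ?_) (fun t ht => ?_)) (generateFrom_le ?_)
  · exact measurableSet_generateFrom ⟨s, hs, Set.univ, .univ, Set.inter_univ s⟩
  · exact measurableSet_generateFrom ⟨Set.univ, .univ, t, ht, Set.univ_inter t⟩
  · rintro _ ⟨s, hs, t, ht, rfl⟩
    exact (le_sup_left (a := F) s hs).inter (le_sup_right (a := F) t ht)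

namespace MeasureTheory

variable {Ω E : Type*} [NormedAddCommGroup E] [NormedSpace ℝ E]

lemma setIntegral_eq_setIntegral_of_isPiSystem {m₀ m : MeasurableSpace Ω} {μ : Measure Ω}
    (hm₀ : m₀ ≤ m) {S : Set (Set Ω)} (hgen : m₀ = MeasurableSpace.generateFrom S)
    (hS : IsPiSystem S) {f g : Ω → E} (hf : Integrable f μ) (hg : Integrable g μ)
    (hbasic : ∀ s ∈ S, ∫ ω in s, f ω ∂μ = ∫ ω in s, g ω ∂μ)
    (huniv : ∫ ω, f ω ∂μ = ∫ ω, g ω ∂μ) {s : Set Ω} (hs : MeasurableSet[m₀] s) :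
    ∫ ω in s, f ω ∂μ = ∫ ω in s, g ω ∂μ := by
  induction s, hs using MeasurableSpace.induction_on_inter hgen hS with
  | empty => simp
  | basic s hs => exact hbasic s hs
  | compl s hs ih =>
    rw [← sub_eq_of_eq_add' (integral_add_compl (hm₀ s hs) hf).symm,
      ← sub_eq_of_eq_add' (integral_add_compl (hm₀ s hs) hg).symm, ih, huniv]
  | iUnion s hdisj hs ih =>
    rw [integral_iUnion (fun i => hm₀ _ (hs i)) hdisj hf.integrableOn,
      integral_iUnion (fun i => hm₀ _ (hs i)) hdisj hg.integrableOn]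
    exact tsum_congr ih

lemma condExp_comp_ae_eq_of_measurePreserving [CompleteSpace E] {H m : MeasurableSpace Ω}
    {μ : Measure Ω} {Ω' : Type*} {m' : MeasurableSpace Ω'} {μ' : Measure Ω'}
    [IsFiniteMeasure μ'] {π : Ω' → Ω} (hπ : MeasurePreserving π μ' μ) (hH : H ≤ m)
    {f : Ω → E} (hf : Integrable f μ) :
    μ'[f ∘ π | H.comap π] =ᵐ[μ'] μ[f | H] ∘ π := by
  have : IsFiniteMeasure μ := hπ.map_eq ▸ inferInstance
  have hπH : Measurable[H.comap π, H] π := Measurable.of_comap_le le_rfl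
  have hpull : ∀ {h : Ω → E}, AEStronglyMeasurable h μ → ∀ {u}, MeasurableSet[H] u →
      ∫ ω' in π ⁻¹' u, h (π ω') ∂μ' = ∫ ω in u, h ω ∂μ := fun hh _ hu => by
    rw [← setIntegral_map (hH _ hu) (hπ.map_eq ▸ hh) hπ.measurable.aemeasurable, hπ.map_eq]
  refine (ae_eq_condExp_of_forall_setIntegral_eq
    ((MeasurableSpace.comap_mono hH).trans hπ.measurable.comap_le)
    (hπ.integrable_comp_of_integrable hf)
    (fun s _ _ => (hπ.integrable_comp_of_integrable integrable_condExp).integrableOn) ?_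
    (stronglyMeasurable_condExp.comp_measurable hπH).aestronglyMeasurable).symm
  rintro _ ⟨u, hu, rfl⟩ -
  exact (hpull integrable_condExp.1 hu).trans
    ((setIntegral_condExp hH hf hu).trans (hpull hf.1 hu).symm)

end MeasureTheory

namespace ProbabilityTheory

variable {Ω E : Type*} [NormedAddCommGroup E] [NormedSpace ℝ E]

lemma IndepFun.integral_comp_eq_integral_integral {ε β : Type*}
    {m : MeasurableSpace Ω} {μ : Measure Ω} [MeasurableSpace ε] [MeasurableSpace β]
    [IsFiniteMeasure μ] {V : Ω → ε} {Z : Ω → β}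
    (hVZ : IndepFun V Z μ) (hV : AEMeasurable V μ) (hZ : AEMeasurable Z μ) {k : ε × β → E}
    (hk : AEStronglyMeasurable k ((μ.map V).prod (μ.map Z)))
    (hki : Integrable (fun ω => k (V ω, Z ω)) μ) :
    ∫ ω, k (V ω, Z ω) ∂μ = ∫ ω, ∫ x, k (V ω, x) ∂(μ.map Z) ∂μ := by
  have hmap : μ.map (fun ω => (V ω, Z ω)) = (μ.map V).prod (μ.map Z) :=
    (indepFun_iff_map_prod_eq_prod_map_map hV hZ).mp hVZ
  have hVZm : AEMeasurable (fun ω => (V ω, Z ω)) μ := hV.prodMk hZ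
  have hk_int : Integrable k ((μ.map V).prod (μ.map Z)) := by
    rw [← hmap] at hk ⊢
    exact (integrable_map_measure hk hVZm).mpr hki
  calc ∫ ω, k (V ω, Z ω) ∂μ = ∫ p, k p ∂(μ.map (fun ω => (V ω, Z ω))) :=
        (integral_map hVZm (hmap ▸ hk)).symm
    _ = ∫ v, ∫ x, k (v, x) ∂(μ.map Z) ∂(μ.map V) := by rw [hmap, integral_prod k hk_int]
    _ = ∫ ω, ∫ x, k (V ω, x) ∂(μ.map Z) ∂μ :=
        integral_map hV hk_int.integral_prod_left.aestronglyMeasurable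

lemma condExp_comp_prodMk_ae_eq_integral_of_indep [CompleteSpace E] {F m : MeasurableSpace Ω}
    {μ : Measure Ω} [IsProbabilityMeasure μ] (hF : F ≤ m) {β γ : Type*} [MeasurableSpace β]
    [MeasurableSpace γ] {Z : Ω → β} {Y : Ω → γ} (hZ : Measurable Z) (hY : Measurable[F] Y)
    (hZF : Indep (MeasurableSpace.comap Z inferInstance) F μ) {k : β × γ → E}
    (hk : StronglyMeasurable k) {C : ℝ} (hkC : ∀ p, ‖k p‖ ≤ C) :
    μ[fun ω => k (Z ω, Y ω) | F] =ᵐ[μ] fun ω => ∫ x, k (x, Y ω) ∂(μ.map Z) := by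
  have : IsProbabilityMeasure (μ.map Z) := Measure.isProbabilityMeasure_map hZ.aemeasurable
  have hYm : Measurable Y := hY.mono hF le_rfl
  have hg : StronglyMeasurable fun y => ∫ x, k (x, y) ∂(μ.map Z) := hk.integral_prod_left'
  have hint : Integrable (fun ω => k (Z ω, Y ω)) μ :=
    .of_bound (hk.comp_measurable (hZ.prodMk hYm)).aestronglyMeasurable C
      (ae_of_all _ fun ω => hkC _)
  have hgY_int : Integrable (fun ω => ∫ x, k (x, Y ω) ∂(μ.map Z)) μ :=
    .of_bound (hg.comp_measurable hYm).aestronglyMeasurable C (ae_of_all _ fun ω => by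
      simpa using norm_integral_le_of_norm_le_const (μ := μ.map Z) (ae_of_all _ fun x => hkC _))
  refine (ae_eq_condExp_of_forall_setIntegral_eq hF hint (fun s _ _ => hgY_int.integrableOn) ?_
    (hg.comp_measurable hY).aestronglyMeasurable).symm
  intro s hs _
  -- `1_s` is carried along in the `F`-measurable variable, so Fubini applies to `∫_s`.
  have hV : Measurable[F] fun ω => (s.indicator (1 : Ω → ℝ) ω, Y ω) :=
    .prodMk (.indicator measurable_const hs) hY
  have hVZ : IndepFun (fun ω => (s.indicator (1 : Ω → ℝ) ω, Y ω)) Z μ := by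
    rw [IndepFun_iff_Indep]
    exact (indep_of_indep_of_le_right hZF hV.comap_le).symm
  have hindicator : ∀ f : Ω → E, (fun ω => s.indicator (1 : Ω → ℝ) ω • f ω) = s.indicator f :=
    fun f => funext fun ω => by by_cases h : ω ∈ s <;> simp [h]
  have hfubini := hVZ.integral_comp_eq_integral_integral (hV.mono hF le_rfl).aemeasurable
    hZ.aemeasurable (k := fun p => p.1.1 • k (p.2, p.1.2))
    ((measurable_fst.comp measurable_fst).stronglyMeasurable.smul
      (hk.comp_measurable (by fun_prop))).aestronglyMeasurable
    (by simpa only [hindicator] using hint.indicator (hF s hs))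
  simp only [integral_smul, hindicator, integral_indicator (hF s hs)] at hfubini
  exact hfubini.symm

lemma condExp_sup_ae_eq_condExp_of_condIndep {F G m : MeasurableSpace Ω} {μ : Measure Ω}
    [IsFiniteMeasure μ] (hF : F ≤ m) (hG : G ≤ m) {f : Ω → ℝ} (hf : Integrable f μ)
    (hfG : ∀ t, MeasurableSet[G] t →
      μ[fun ω => f ω * t.indicator (fun _ => (1 : ℝ)) ω | F]
        =ᵐ[μ] fun ω => μ[f | F] ω * μ[t.indicator (fun _ => (1 : ℝ)) | F] ω) :
    μ[f | F ⊔ G] =ᵐ[μ] μ[f | F] := by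
  have hbasic : ∀ u ∈ Set.image2 (· ∩ ·) {s | MeasurableSet[F] s} {t | MeasurableSet[G] t},
      ∫ ω in u, μ[f | F] ω ∂μ = ∫ ω in u, f ω ∂μ := by
    rintro _ ⟨s, hs, t, ht, rfl⟩
    have hmul : ∀ u : Ω → ℝ, (fun ω => u ω * t.indicator (fun _ => (1 : ℝ)) ω) = t.indicator u :=
      fun u => funext fun ω => by by_cases h : ω ∈ t <;> simp [h]
    have hrestrict : ∀ u : Ω → ℝ,
        ∫ ω in s, u ω * t.indicator (fun _ => (1 : ℝ)) ω ∂μ = ∫ ω in s ∩ t, u ω ∂μ := fun u => by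
      rw [hmul, setIntegral_indicator (hG t ht)]
    have hint : ∀ {u : Ω → ℝ}, Integrable u μ →
        Integrable (fun ω => u ω * t.indicator (fun _ => (1 : ℝ)) ω) μ := fun hu => by
      rw [hmul]; exact hu.indicator (hG t ht)
    calc ∫ ω in s ∩ t, μ[f | F] ω ∂μ
        = ∫ ω in s, μ[fun ω => μ[f | F] ω * t.indicator (fun _ => (1 : ℝ)) ω | F] ω ∂μ := by
          rw [setIntegral_condExp hF (hint integrable_condExp) hs, hrestrict]
      _ = ∫ ω in s, μ[fun ω => f ω * t.indicator (fun _ => (1 : ℝ)) ω | F] ω ∂μ := by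
          refine integral_congr_ae (ae_restrict_of_ae ?_)
          exact (condExp_mul_of_stronglyMeasurable_left stronglyMeasurable_condExp
            (hint integrable_condExp) ((integrable_const 1).indicator (hG t ht))).trans
            (hfG t ht).symm
      _ = ∫ ω in s ∩ t, f ω ∂μ := by rw [setIntegral_condExp hF (hint hf) hs, hrestrict]
  refine (ae_eq_condExp_of_forall_setIntegral_eq (sup_le hF hG) hf
    (fun _ _ _ => integrable_condExp.integrableOn) (fun u hu _ => ?_)
    (stronglyMeasurable_condExp.mono (le_sup_left : F ≤ F ⊔ G)).aestronglyMeasurable).symm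
  exact setIntegral_eq_setIntegral_of_isPiSystem (sup_le hF hG)
    (MeasurableSpace.sup_eq_generateFrom_image2_inter F G)
    ((@MeasurableSpace.isPiSystem_measurableSet Ω F).image2_inter
      (@MeasurableSpace.isPiSystem_measurableSet Ω G)) integrable_condExp hf
    hbasic (integral_condExp hF) hu

section ProductSpace

variable {H m : MeasurableSpace Ω} {μ : Measure Ω} [IsProbabilityMeasure μ] {β : Type*}
  [MeasurableSpace β] {ν : Measure β} [IsProbabilityMeasure ν]

lemma indep_comap_snd_comap_fst (hH : H ≤ m) :
    Indep (MeasurableSpace.comap Prod.snd inferInstance) (H.comap Prod.fst) (μ.prod ν) :=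
  indep_of_indep_of_le_right ((IndepFun_iff_Indep _ _ _).mp
    (indepFun_prod (X := id) (Y := id) measurable_id measurable_id)).symm
    (MeasurableSpace.comap_mono hH)

lemma condExp_comp_snd_ae_eq_integral [CompleteSpace E] (hH : H ≤ m) {γ : Type*}
    [MeasurableSpace γ] {Y : Ω → γ} (hY : Measurable[H] Y) {k : β × γ → E}
    (hk : StronglyMeasurable k) {C : ℝ} (hkC : ∀ p, ‖k p‖ ≤ C) :
    (μ.prod ν)[fun p => k (p.2, Y p.1) | H.comap Prod.fst]
      =ᵐ[μ.prod ν] fun p => ∫ x, k (x, Y p.1) ∂ν := by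
  have hfst : Measurable[H.comap Prod.fst, H] (Prod.fst : Ω × β → Ω) :=
    Measurable.of_comap_le le_rfl
  have h := condExp_comp_prodMk_ae_eq_integral_of_indep
    ((MeasurableSpace.comap_mono hH).trans measurable_fst.comap_le) measurable_snd
    (hY.comp hfst) (indep_comap_snd_comap_fst (μ := μ) (ν := ν) hH) hk hkC
  rwa [measurePreserving_snd.map_eq] at h

end ProductSpace

end ProbabilityTheory

/-- **Extension of Bolthausen's conditioning lemma.** Let `F`, `G` be sub-σ-fields, `Y` be
`F`-measurable, `X ≅ X̄` in law with `X̄ ⫫ F`. If `φ(X,Y)` has the same conditional law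
given `F` as `φ(X̄,Y)` and `φ(X,Y)` is conditionally independent of `G` given `F`, then on a
(possibly enlarged) probability space there is `X̃` equal in law to `X`, independent of
`H = σ(F ∪ G)`, such that `φ(X,Y)` has the same conditional law given `H` as `φ(X̃,Y)`. -/
theorem bolthausen_extension
    {Ω : Type} (F G : MeasurableSpace Ω)
    {m : MeasurableSpace Ω} (μ : Measure Ω) [IsProbabilityMeasure μ]
    {β γ δ : Type} [MeasurableSpace β] [MeasurableSpace γ] [MeasurableSpace δ]
    (hF : F ≤ m) (hG : G ≤ m)
    (X Xb : Ω → β) (Y : Ω → γ) (φ : β → γ → δ)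
    (hX : Measurable[m] X) (hXb : Measurable[m] Xb)
    (hφ : Measurable fun p : β × γ => φ p.1 p.2)
    (hY : Measurable[F] Y)
    (hlaw : Measure.map X μ = Measure.map Xb μ)
    (hXbF : Indep (MeasurableSpace.comap Xb inferInstance) F μ)
    (hcondlaw : ∀ A : Set δ, MeasurableSet A →
      MeasureTheory.condExp F μ
          (fun ω => Set.indicator A (fun _ => (1 : ℝ)) (φ (X ω) (Y ω)))
        =ᵐ[μ] MeasureTheory.condExp F μ
          (fun ω => Set.indicator A (fun _ => (1 : ℝ)) (φ (Xb ω) (Y ω))))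
    (hcondindep : ∀ A : Set δ, MeasurableSet A → ∀ B : Set Ω, MeasurableSet[G] B →
      MeasureTheory.condExp F μ
          (fun ω => Set.indicator A (fun _ => (1 : ℝ)) (φ (X ω) (Y ω))
            * Set.indicator B (fun _ => (1 : ℝ)) ω)
        =ᵐ[μ] fun ω =>
          MeasureTheory.condExp F μ
              (fun ω' => Set.indicator A (fun _ => (1 : ℝ)) (φ (X ω') (Y ω'))) ω
            * MeasureTheory.condExp F μ
              (fun ω' => Set.indicator B (fun _ => (1 : ℝ)) ω') ω) :
    ∃ (Ω' : Type) (m' : MeasurableSpace Ω') (μ' : Measure Ω') (π : Ω' → Ω) (Xt : Ω' → β),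
      IsProbabilityMeasure μ' ∧
      Measurable[m'] π ∧ Measure.map π μ' = μ ∧
      Measurable[m'] Xt ∧
      Measure.map Xt μ' = Measure.map X μ ∧
      Indep (MeasurableSpace.comap Xt inferInstance)
        (MeasurableSpace.comap π (F ⊔ G)) μ' ∧
      ∀ A : Set δ, MeasurableSet A →
        MeasureTheory.condExp (MeasurableSpace.comap π (F ⊔ G)) μ'
            (fun ω' => Set.indicator A (fun _ => (1 : ℝ)) (φ (X (π ω')) (Y (π ω'))))
          =ᵐ[μ'] MeasureTheory.condExp (MeasurableSpace.comap π (F ⊔ G)) μ'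
            (fun ω' => Set.indicator A (fun _ => (1 : ℝ)) (φ (Xt ω') (Y (π ω')))) := by
  set ν := μ.map X
  have : IsProbabilityMeasure ν := Measure.isProbabilityMeasure_map hX.aemeasurable
  have hH : F ⊔ G ≤ m := sup_le hF hG
  refine ⟨Ω × β, inferInstance, μ.prod ν, Prod.fst, Prod.snd, inferInstance, measurable_fst,
    measurePreserving_fst.map_eq, measurable_snd, measurePreserving_snd.map_eq,
    indep_comap_snd_comap_fst hH, fun A hA => ?_⟩
  let k : β × γ → ℝ := fun p => A.indicator (fun _ => 1) (φ p.1 p.2)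
  have hk : StronglyMeasurable k := ((measurable_const.indicator hA).comp hφ).stronglyMeasurable
  have hk_le : ∀ p, ‖k p‖ ≤ 1 := fun p => by
    simpa using norm_indicator_le_norm_self (fun _ => (1 : ℝ)) (φ p.1 p.2)
  have hint : Integrable (fun ω => k (X ω, Y ω)) μ :=
    .of_bound (hk.comp_measurable (hX.prodMk (hY.mono hF le_rfl))).aestronglyMeasurable 1
      (ae_of_all _ fun ω => hk_le _)
  have hfreeze : μ[fun ω => k (X ω, Y ω) | F ⊔ G] =ᵐ[μ] fun ω => ∫ x, k (x, Y ω) ∂ν :=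
    (condExp_sup_ae_eq_condExp_of_condIndep hF hG hint (hcondindep A hA)).trans <|
      (hcondlaw A hA).trans
        (hlaw ▸ condExp_comp_prodMk_ae_eq_integral_of_indep hF hXb hY hXbF hk hk_le)
  calc _ =ᵐ[μ.prod ν] μ[fun ω => k (X ω, Y ω) | F ⊔ G] ∘ Prod.fst :=
        condExp_comp_ae_eq_of_measurePreserving measurePreserving_fst hH hint
    _ =ᵐ[μ.prod ν] fun p => ∫ x, k (x, Y p.1) ∂ν :=
        measurePreserving_fst.quasiMeasurePreserving.ae_eq_comp hfreeze
    _ =ᵐ[μ.prod ν] _ :=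
        (condExp_comp_snd_ae_eq_integral hH (hY.mono le_sup_left le_rfl) hk hk_le).symm
end

section
/- In the setting of the fixed-point system: for each δ > 1/√2 let σ(δ) > 0 solve δ² σ² = E[(σZ̄ + r̄)₊²] and set γ(δ) = P(σ(δ)Z̄ + r̄ > 0). Then γ(δ) < δ² for every δ > 1/√2. -/
/-!
Let `c = 1/√(2π)` be the maximum of the standard normal density and `R = E r̄`, which is
positive since `r̄ ≥ 0` is not a.s. zero. Conditionally on `r̄ = t`, the event `σZ̄ + t > 0` is
`Z̄ > -t/σ`, of probability at most `1/2 + c t/σ`; hence `γ ≤ 1/2 + cR/σ`. On the other hand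
`(σz + t)₊² ≥ σ² z₊² + 2σ t z₊`, and `E Z̄₊² = 1/2`, `E Z̄₊ = c` together with independence give
`δ²σ² ≥ σ²/2 + 2cRσ`. Thus `γσ² ≤ σ²/2 + cRσ < δ²σ²`.
-/

open Real MeasureTheory ProbabilityTheory Set

lemma gaussianPDFReal_le_inv_sqrt (μ : ℝ) (v : NNReal) (x : ℝ) :
    gaussianPDFReal μ v x ≤ (√(2 * π * v))⁻¹ :=
  mul_le_of_le_one_right (by positivity) <| exp_le_one_iff.2 <|
    div_nonpos_of_nonpos_of_nonneg (neg_nonpos.2 (sq_nonneg _)) (by positivity)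

lemma gaussianPDFReal_zero_one (x : ℝ) :
    gaussianPDFReal 0 1 x = (√(2 * π))⁻¹ * exp (-2⁻¹ * x ^ 2) := by
  simp only [gaussianPDFReal, NNReal.coe_one, mul_one, sub_zero]
  ring_nf

lemma gaussianReal_real_eq_integral (μ : ℝ) {v : NNReal} (hv : v ≠ 0) (s : Set ℝ) :
    (gaussianReal μ v).real s = ∫ x in s, gaussianPDFReal μ v x := by
  rw [measureReal_def, gaussianReal_apply_eq_integral μ hv,
    ENNReal.toReal_ofReal (setIntegral_nonneg_of_ae (ae_of_all _ (gaussianPDFReal_nonneg μ v)))]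

lemma gaussianReal_real_Ioc_le (μ : ℝ) {v : NNReal} (hv : v ≠ 0) {a b : ℝ} (hab : a ≤ b) :
    (gaussianReal μ v).real (Ioc a b) ≤ (√(2 * π * v))⁻¹ * (b - a) := by
  rw [gaussianReal_real_eq_integral μ hv]
  calc ∫ x in Ioc a b, gaussianPDFReal μ v x ≤ ∫ _ in Ioc a b, (√(2 * π * v))⁻¹ :=
        setIntegral_mono (integrable_gaussianPDFReal μ v).integrableOn (integrable_const _)
          (gaussianPDFReal_le_inv_sqrt μ v)
    _ = (√(2 * π * v))⁻¹ * (b - a) := by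
        rw [setIntegral_const, volume_real_Ioc_of_le hab, smul_eq_mul, mul_comm]

lemma gaussianReal_real_Ioi_zero : (gaussianReal 0 1).real (Ioi 0) = 1 / 2 := by
  rw [gaussianReal_real_eq_integral 0 one_ne_zero]
  simp_rw [gaussianPDFReal_zero_one]
  rw [integral_const_mul, integral_gaussian_Ioi, show π / 2⁻¹ = 2 * π by ring]
  field_simp

lemma gaussianReal_real_Ioi_neg_le {s : ℝ} (hs : 0 ≤ s) :
    (gaussianReal 0 1).real (Ioi (-s)) ≤ 1 / 2 + (√(2 * π))⁻¹ * s := by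
  rw [← Ioc_union_Ioi_eq_Ioi (neg_nonpos.2 hs)]
  refine (measureReal_union_le _ _).trans ?_
  have hIoc := gaussianReal_real_Ioc_le 0 one_ne_zero (neg_nonpos.2 hs)
  rw [NNReal.coe_one, mul_one, zero_sub, neg_neg] at hIoc
  linarith [gaussianReal_real_Ioi_zero]

lemma integral_Ioi_mul_exp_neg_mul_sq {b : ℝ} (hb : 0 < b) :
    ∫ x in Ioi 0, x * exp (-b * x ^ 2) = (2 * b)⁻¹ := by
  apply Complex.ofReal_injective
  rw [← integral_complex_ofReal]
  push_cast
  exact integral_mul_cexp_neg_mul_sq (by simpa using hb)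

lemma integral_max_zero_gaussianReal : ∫ x, max x 0 ∂gaussianReal 0 1 = (√(2 * π))⁻¹ := by
  rw [integral_gaussianReal_eq_integral_smul one_ne_zero,
    ← setIntegral_eq_integral_of_forall_compl_eq_zero (s := Ioi 0) fun x hx => by
      rw [max_eq_right (not_lt.1 hx), smul_zero]]
  rw [setIntegral_congr_fun measurableSet_Ioi fun x (hx : 0 < x) => by
    rw [smul_eq_mul, max_eq_left hx.le, gaussianPDFReal_zero_one, mul_assoc, mul_comm (exp _)]]
  rw [integral_const_mul, integral_Ioi_mul_exp_neg_mul_sq (by norm_num)]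
  norm_num

lemma integral_sq_gaussianReal : ∫ x, x ^ 2 ∂gaussianReal 0 1 = 1 := by
  simpa [variance_id_gaussianReal, integral_id_gaussianReal] using
    (variance_eq_sub (memLp_id_gaussianReal (μ := 0) (v := 1) 2)).symm

lemma integral_max_zero_sq_gaussianReal : ∫ x, max x 0 ^ 2 ∂gaussianReal 0 1 = 1 / 2 := by
  have hsymm : ∫ x, max (-x) 0 ^ 2 ∂gaussianReal 0 1 = ∫ x, max x 0 ^ 2 ∂gaussianReal 0 1 := by
    have h := gaussianReal_map_neg (μ := 0) (v := 1)
    rw [neg_zero] at h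
    conv_rhs => rw [← h]
    rw [integral_map (by fun_prop) (by fun_prop)]
  have hL2 : MemLp (fun x : ℝ => x) 2 (gaussianReal 0 1) := memLp_id_gaussianReal 2
  have hsum :
      ∫ x, max x 0 ^ 2 ∂gaussianReal 0 1 + ∫ x, max (-x) 0 ^ 2 ∂gaussianReal 0 1 = 1 := by
    rw [← integral_add hL2.pos_part.integrable_sq hL2.neg_part.integrable_sq,
      ← integral_sq_gaussianReal]
    congr 1 with x
    rcases le_total x 0 with hx | hx <;> simp [hx]
  linarith

lemma measureReal_prod_le_integral {α β : Type*} [MeasurableSpace α] [MeasurableSpace β]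
    {μ : Measure α} {ν : Measure β} [IsFiniteMeasure μ] [SFinite ν] {s : Set (α × β)}
    (hs : MeasurableSet s) {f : β → ℝ} (hf : Integrable f ν)
    (h : ∀ᵐ y ∂ν, μ.real ((fun x => (x, y)) ⁻¹' s) ≤ f y) :
    (μ.prod ν).real s ≤ ∫ y, f y ∂ν := by
  have hf_nonneg : 0 ≤ᵐ[ν] f := h.mono fun y hy => measureReal_nonneg.trans hy
  rw [measureReal_def, Measure.prod_apply_symm hs]
  refine ENNReal.toReal_le_of_le_ofReal (integral_nonneg_of_ae hf_nonneg) ?_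
  rw [ofReal_integral_eq_lintegral_ofReal hf hf_nonneg]
  exact lintegral_mono_ae <| h.mono fun y hy =>
    (ENNReal.le_ofReal_iff_toReal_le (measure_ne_top _ _) (measureReal_nonneg.trans hy)).2 hy

lemma max_zero_sq_add_le {s a b : ℝ} (hs : 0 ≤ s) :
    s ^ 2 * max a 0 ^ 2 + 2 * s * (b * max a 0) ≤ max (s * a + b) 0 ^ 2 := by
  rcases le_total a 0 with ha | ha
  · simp [max_eq_right ha]
  rcases le_total (s * a + b) 0 with hab | hab
  · rw [max_eq_left ha, max_eq_right hab]
    nlinarith [mul_nonneg hs ha]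
  · rw [max_eq_left ha, max_eq_left hab]
    nlinarith [sq_nonneg b]

section

variable {Ω : Type*} [MeasurableSpace Ω] {P : Measure Ω} [IsProbabilityMeasure P] {Z r : Ω → ℝ}
  {σ : ℝ}

lemma integral_pos_of_map_ne_dirac_zero (hr_nonneg : 0 ≤ᵐ[P] r) (hr_int : Integrable r P)
    (hlaw : P.map r ≠ Measure.dirac 0) : 0 < ∫ ω, r ω ∂P := by
  refine (integral_nonneg_of_ae hr_nonneg).lt_of_ne fun h => hlaw ?_
  rw [Measure.map_congr ((integral_eq_zero_iff_of_nonneg_ae hr_nonneg hr_int).1 h.symm),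
    Pi.zero_def, Measure.map_const, measure_univ, one_smul]

lemma measureReal_mul_add_pos_le (hZ : HasLaw Z (gaussianReal 0 1) P) (hr : AEMeasurable r P)
    (hZr : IndepFun Z r P) (hr_nonneg : 0 ≤ᵐ[P] r) (hr_int : Integrable r P) (hσ : 0 < σ) :
    P.real {ω | 0 < σ * Z ω + r ω} ≤ 1 / 2 + (√(2 * π))⁻¹ * (∫ ω, r ω ∂P) / σ := by
  have hlaw := (indepFun_iff_hasLaw_prodMk_prod hZ ⟨hr, rfl⟩).mp hZr
  have hs : MeasurableSet {q : ℝ × ℝ | 0 < σ * q.1 + q.2} := by measurability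
  rw [hlaw.measureReal_eq (p := fun q => 0 < σ * q.1 + q.2) hs]
  have := Measure.isProbabilityMeasure_map hr
  have hν : Integrable (fun t => t) (P.map r) :=
    (integrable_map_measure (by fun_prop) hr).2 hr_int
  calc ((gaussianReal 0 1).prod (P.map r)).real {q | 0 < σ * q.1 + q.2}
      ≤ ∫ t, 1 / 2 + (√(2 * π))⁻¹ * (t / σ) ∂P.map r := by
        refine measureReal_prod_le_integral hs ((integrable_const _).add
          ((hν.div_const σ).const_mul _)) ?_
        filter_upwards [(ae_map_iff hr measurableSet_Ici).2 hr_nonneg] with t (ht : 0 ≤ t)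
        have hslice :
            (fun z => (z, t)) ⁻¹' {q : ℝ × ℝ | 0 < σ * q.1 + q.2} = Ioi (-(t / σ)) := by
          ext z
          change 0 < σ * z + t ↔ -(t / σ) < z
          rw [neg_div', div_lt_iff₀ hσ, mul_comm z, neg_lt_iff_pos_add]
        rw [hslice]
        exact gaussianReal_real_Ioi_neg_le (div_nonneg ht hσ.le)
    _ = 1 / 2 + (√(2 * π))⁻¹ * (∫ ω, r ω ∂P) / σ := by
        rw [integral_add (integrable_const _) ((hν.div_const σ).const_mul _), integral_const,
          integral_const_mul, integral_div, integral_map (f := fun t => t) hr (by fun_prop)]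
        simp [mul_div_assoc]

lemma le_integral_max_mul_add_sq (hZ : HasLaw Z (gaussianReal 0 1) P)
    (hZr : IndepFun Z r P) (hr : MemLp r 2 P) (hσ : 0 ≤ σ) :
    σ ^ 2 / 2 + 2 * σ * ((√(2 * π))⁻¹ * ∫ ω, r ω ∂P) ≤ ∫ ω, max (σ * Z ω + r ω) 0 ^ 2 ∂P := by
  have hZ2 : MemLp Z 2 P := by
    have h : MemLp id 2 (P.map Z) := hZ.map_eq ▸ memLp_id_gaussianReal 2
    exact h.comp_of_map hZ.aemeasurable
  have hZpos_indep : IndepFun (fun ω => max (Z ω) 0) r P :=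
    hZr.comp (measurable_id.max measurable_const) measurable_id
  have hZpos_int : Integrable (fun ω => max (Z ω) 0) P := hZ2.pos_part.integrable one_le_two
  have hr_int : Integrable r P := hr.integrable one_le_two
  have hprod_int : Integrable (fun ω => r ω * max (Z ω) 0) P :=
    hZpos_indep.symm.integrable_mul hr_int hZpos_int
  have hprod : ∫ ω, r ω * max (Z ω) 0 ∂P = (∫ ω, r ω ∂P) * (√(2 * π))⁻¹ := by
    rw [hZpos_indep.symm.integral_fun_mul_eq_mul_integral hr_int.aestronglyMeasurable
      hZpos_int.aestronglyMeasurable]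
    exact congrArg _ ((hZ.integral_comp (by fun_prop)).trans integral_max_zero_gaussianReal)
  have hsq : ∫ ω, max (Z ω) 0 ^ 2 ∂P = 1 / 2 :=
    (hZ.integral_comp (by fun_prop)).trans integral_max_zero_sq_gaussianReal
  calc σ ^ 2 / 2 + 2 * σ * ((√(2 * π))⁻¹ * ∫ ω, r ω ∂P)
      = ∫ ω, σ ^ 2 * max (Z ω) 0 ^ 2 + 2 * σ * (r ω * max (Z ω) 0) ∂P := by
        rw [integral_add (hZ2.pos_part.integrable_sq.const_mul _) (hprod_int.const_mul _),
          integral_const_mul, integral_const_mul, hsq, hprod]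
        ring
    _ ≤ ∫ ω, max (σ * Z ω + r ω) 0 ^ 2 ∂P :=
        integral_mono ((hZ2.pos_part.integrable_sq.const_mul _).add (hprod_int.const_mul _))
          ((hZ2.const_mul σ).add hr).pos_part.integrable_sq fun ω => max_zero_sq_add_le hσ

end

/-- **`γ(δ) < δ²`.** For each `δ > 1/√2`, if `σ > 0` solves `δ² σ² = E[(σZ̄ + r̄)₊²]` and
`γ = P(σZ̄ + r̄ > 0)`, then `γ < δ²`. -/
theorem gamma_lt_delta_sq
    {Ω : Type} [MeasurableSpace Ω] (P : Measure Ω) [IsProbabilityMeasure P]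
    (Z r : Ω → ℝ) (hZmeas : Measurable Z) (hrmeas : Measurable r)
    (hZ : Measure.map Z P = gaussianReal 0 1)
    (hindep : IndepFun Z r P)
    (hrpos : ∀ᵐ ω ∂P, 0 ≤ r ω)
    (hrmom : Integrable (fun ω => r ω ^ 2) P)
    (hrlaw : Measure.map r P ≠ Measure.dirac 0) :
    ∀ δ : ℝ, 1 / Real.sqrt 2 < δ → ∀ σ : ℝ, 0 < σ →
      δ ^ 2 * σ ^ 2 = (∫ ω, max (σ * Z ω + r ω) 0 ^ 2 ∂P) →
      (P {ω | 0 < σ * Z ω + r ω}).toReal < δ ^ 2 := by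
  intro δ _ σ hσ heq
  have hZlaw : HasLaw Z (gaussianReal 0 1) P := ⟨hZmeas.aemeasurable, hZ⟩
  have hr2 : MemLp r 2 P := (memLp_two_iff_integrable_sq hrmeas.aestronglyMeasurable).2 hrmom
  have hr_int : Integrable r P := hr2.integrable one_le_two
  have hR : 0 < ∫ ω, r ω ∂P := integral_pos_of_map_ne_dirac_zero hrpos hr_int hrlaw
  have hγ := measureReal_mul_add_pos_le hZlaw hrmeas.aemeasurable hindep hrpos hr_int hσ
  have hδ := heq ▸ le_integral_max_mul_add_sq hZlaw hindep hr2 hσ.le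
  have hcR : 0 < (√(2 * π))⁻¹ * ∫ ω, r ω ∂P := by positivity
  have hσ2 : 0 < σ ^ 2 := by positivity
  refine lt_of_mul_lt_mul_right ?_ hσ2.le
  calc (P {ω | 0 < σ * Z ω + r ω}).toReal * σ ^ 2
      ≤ (1 / 2 + (√(2 * π))⁻¹ * (∫ ω, r ω ∂P) / σ) * σ ^ 2 :=
        mul_le_mul_of_nonneg_right hγ hσ2.le
    _ = σ ^ 2 / 2 + σ * ((√(2 * π))⁻¹ * ∫ ω, r ω ∂P) := by field_simp
    _ < σ ^ 2 / 2 + 2 * σ * ((√(2 * π))⁻¹ * ∫ ω, r ω ∂P) := by nlinarith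
    _ ≤ δ ^ 2 * σ ^ 2 := hδ
end

section
/- With x(δ) = −1/σ(δ) and γ(δ) = E[Q(r̄ x(δ))], the derivative of γ with respect to δ satisfies γ′(δ) = −(δ x(δ)/(δ² − E[Q(r̄ x(δ))])) · E[r̄ e^{−(r̄ x(δ))²/2}]/√(2π), and moreover γ′(δ) < δ for every δ > 1/√2. -/
/-!
Write `s = x(δ) < 0`, `A = E[r̄ φ(r̄ s)]` and `B = E[r̄² Q(r̄ s)]`, where `φ` is the standard
Gaussian density. Since `Q' = −φ` and `f'(x) = 2(x Q(x) − φ(x))` grow at most linearly and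
`r̄ ∈ L²`, one may differentiate under the expectation: `d/ds E[Q(r̄ s)] = −A` and
`d/ds E[f(r̄ s)] = 2(sB − A)`. Differentiating `δ² = E[f(r̄ x(δ))]` gives `x'(δ) = δ / (sB − A)`,
and expanding `f = Q + x²Q − xφ` gives `δ² − γ(δ) = s(sB − A)`, so the chain rule yields
`γ'(δ) = −A x'(δ)`, which is the stated formula. Finally `A ≥ 0` and `B > 0` (as `r̄` is not a.s.
zero), so `γ'(δ) = δA / (A − sB) < δ`.
-/

open Real MeasureTheory ProbabilityTheory

noncomputable section

/-- The standard Gaussian tail function `Q(x) = ∫ₓ^∞ e^{−t²/2}/√(2π) dt`. -/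
def gaussQ (x : ℝ) : ℝ := ∫ t in Set.Ioi x, Real.exp (-t ^ 2 / 2) / Real.sqrt (2 * π)

/-- `f(x) = (1+x²)Q(x) − x e^{−x²/2}/√(2π)`. -/
def gaussF (x : ℝ) : ℝ :=
  (1 + x ^ 2) * gaussQ x - x * (Real.exp (-x ^ 2 / 2) / Real.sqrt (2 * π))

local notation "φ" => gaussianPDFReal 0 1

lemma gaussianPDFReal_zero_one_s17 (x : ℝ) : φ x = Real.exp (-x ^ 2 / 2) / Real.sqrt (2 * π) := by
  simp [gaussianPDFReal, div_eq_inv_mul]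

lemma gaussianPDFReal_zero_one_le_one (x : ℝ) : φ x ≤ 1 := by
  rw [gaussianPDFReal_zero_one_s17, div_le_one (by positivity)]
  calc Real.exp (-x ^ 2 / 2) ≤ 1 := Real.exp_le_one_iff.2 (by nlinarith [sq_nonneg x])
    _ ≤ Real.sqrt (2 * π) := Real.one_le_sqrt.2 (by nlinarith [Real.pi_gt_three])

lemma hasDerivAt_gaussianPDFReal_zero_one (x : ℝ) : HasDerivAt φ (-x * φ x) x := by
  have h : HasDerivAt (fun y : ℝ => -y ^ 2 / 2) (-x) x :=
    ((hasDerivAt_pow 2 x).neg.div_const 2).congr_deriv (by ring)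
  rw [show φ = _ from funext gaussianPDFReal_zero_one_s17]
  exact (h.exp.div_const _).congr_deriv (by beta_reduce; ring)

lemma continuous_gaussianPDFReal_zero_one : Continuous φ :=
  continuous_iff_continuousAt.2 fun x => (hasDerivAt_gaussianPDFReal_zero_one x).continuousAt

lemma gaussQ_eq_setIntegral (x : ℝ) : gaussQ x = ∫ t in Set.Ioi x, φ t := by
  simp only [gaussQ, gaussianPDFReal_zero_one_s17]

lemma hasDerivAt_gaussQ (x : ℝ) : HasDerivAt gaussQ (-φ x) x := by
  have hφ : Integrable φ := integrable_gaussianPDFReal 0 1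
  have hQ : gaussQ = fun y => gaussQ 0 - ∫ t in (0 : ℝ)..y, φ t := by
    funext y
    rw [gaussQ_eq_setIntegral, gaussQ_eq_setIntegral,
      ← intervalIntegral.integral_Ioi_sub_Ioi' hφ.integrableOn hφ.integrableOn, sub_sub_cancel]
  rw [hQ]
  exact (intervalIntegral.integral_hasDerivAt_right hφ.intervalIntegrable
    (continuous_gaussianPDFReal_zero_one.stronglyMeasurableAtFilter _ _)
    continuous_gaussianPDFReal_zero_one.continuousAt).const_sub _

lemma continuous_gaussQ : Continuous gaussQ :=
  continuous_iff_continuousAt.2 fun x => (hasDerivAt_gaussQ x).continuousAt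

lemma gaussQ_pos (x : ℝ) : 0 < gaussQ x := by
  rw [gaussQ_eq_setIntegral, setIntegral_pos_iff_support_of_nonneg_ae
    (Filter.Eventually.of_forall (gaussianPDFReal_nonneg 0 1))
    (integrable_gaussianPDFReal 0 1).integrableOn]
  simp [Function.support, (gaussianPDFReal_pos 0 1 _ one_ne_zero).ne']

lemma gaussQ_le_one (x : ℝ) : gaussQ x ≤ 1 := by
  rw [gaussQ_eq_setIntegral, ← integral_gaussianPDFReal_eq_one 0 one_ne_zero]
  exact setIntegral_le_integral (integrable_gaussianPDFReal 0 1)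
    (Filter.Eventually.of_forall (gaussianPDFReal_nonneg 0 1))

lemma gaussF_eq (x : ℝ) : gaussF x = (1 + x ^ 2) * gaussQ x - x * φ x := by
  rw [gaussF, gaussianPDFReal_zero_one_s17]

lemma hasDerivAt_gaussF (x : ℝ) : HasDerivAt gaussF (2 * (x * gaussQ x - φ x)) x := by
  rw [funext gaussF_eq]
  have h := (((hasDerivAt_pow 2 x).const_add 1).mul (hasDerivAt_gaussQ x)).sub
    ((hasDerivAt_id x).mul (hasDerivAt_gaussianPDFReal_zero_one x))
  exact h.congr_deriv (by simp only [id]; ring)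

lemma gaussF_mul_eq (a s : ℝ) :
    gaussF (a * s) = gaussQ (a * s) + s ^ 2 * (a ^ 2 * gaussQ (a * s)) - s * (a * φ (a * s)) := by
  rw [gaussF_eq]; ring

section

variable {Ω : Type*} [MeasurableSpace Ω] {P : Measure Ω} {r : Ω → ℝ}

lemma not_ae_eq_zero_of_map_ne_dirac [IsProbabilityMeasure P] (h : P.map r ≠ Measure.dirac 0) :
    ¬ r =ᵐ[P] 0 := fun h0 => h <| by
  rw [Measure.map_congr h0, Pi.zero_def, Measure.map_const, measure_univ, one_smul]

lemma integral_sq_mul_gaussQ_comp_mul_pos (hr0 : ¬ r =ᵐ[P] 0) {s : ℝ}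
    (hint : Integrable (fun ω => r ω ^ 2 * gaussQ (r ω * s)) P) :
    0 < ∫ ω, r ω ^ 2 * gaussQ (r ω * s) ∂P := by
  have hnn : 0 ≤ fun ω => r ω ^ 2 * gaussQ (r ω * s) := fun ω =>
    mul_nonneg (sq_nonneg _) (gaussQ_pos _).le
  refine (integral_nonneg hnn).lt_of_ne fun h => hr0 ?_
  filter_upwards [(integral_eq_zero_iff_of_nonneg hnn hint).1 h.symm] with ω hω
  simpa [(gaussQ_pos _).ne'] using hω

lemma integrable_sq_mul_gaussQ_comp_mul (hr : Measurable r)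
    (hr2 : Integrable (fun ω => r ω ^ 2) P) (s : ℝ) :
    Integrable (fun ω => r ω ^ 2 * gaussQ (r ω * s)) P :=
  hr2.mul_bdd (continuous_gaussQ.measurable.comp (hr.mul_const s)).aestronglyMeasurable
    (Filter.Eventually.of_forall fun ω => by
      rw [Real.norm_eq_abs, abs_of_pos (gaussQ_pos _)]; exact gaussQ_le_one _)

lemma integral_mul_gaussianPDFReal_comp_mul (s : ℝ) :
    ∫ ω, r ω * φ (r ω * s) ∂P
      = (∫ ω, r ω * Real.exp (-(r ω * s) ^ 2 / 2) ∂P) / Real.sqrt (2 * π) := by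
  rw [← integral_div]
  simp only [gaussianPDFReal_zero_one_s17, mul_div_assoc]

variable [IsFiniteMeasure P]

lemma integrable_of_integrable_sq (hr : Measurable r) (hr2 : Integrable (fun ω => r ω ^ 2) P) :
    Integrable r P :=
  ((memLp_two_iff_integrable_sq hr.aestronglyMeasurable).2 hr2).integrable one_le_two

theorem hasDerivAt_integral_comp_mul (hr : Measurable r) (hr2 : Integrable (fun ω => r ω ^ 2) P)
    {g g' : ℝ → ℝ} (hg : ∀ x, HasDerivAt g (g' x) x) (hg' : Continuous g') {C : ℝ}
    (hg'_le : ∀ x, |g' x| ≤ C * (1 + |x|)) {s₀ : ℝ}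
    (hint : Integrable (fun ω => g (r ω * s₀)) P) :
    HasDerivAt (fun s => ∫ ω, g (r ω * s) ∂P) (∫ ω, g' (r ω * s₀) * r ω ∂P) s₀ := by
  have hC : 0 ≤ C := by simpa using (abs_nonneg _).trans (hg'_le 0)
  have hgc : Continuous g := continuous_iff_continuousAt.2 fun x => (hg x).continuousAt
  refine (hasDerivAt_integral_of_dominated_loc_of_deriv_le (Metric.ball_mem_nhds s₀ one_pos)
    (bound := fun ω => C * |r ω| + C * (|s₀| + 1) * r ω ^ 2)
    (F' := fun s ω => g' (r ω * s) * r ω)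
    (Filter.Eventually.of_forall fun s =>
      (hgc.measurable.comp (hr.mul_const s)).aestronglyMeasurable)
    hint ((hg'.measurable.comp (hr.mul_const s₀)).mul hr).aestronglyMeasurable ?_
    (((integrable_of_integrable_sq hr hr2).abs.const_mul C).add (hr2.const_mul _))
    (Filter.Eventually.of_forall fun ω s _ => ?_)).2
  · refine Filter.Eventually.of_forall fun ω s hs => ?_
    have hs' : |s| ≤ |s₀| + 1 := by
      have := abs_sub_abs_le_abs_sub s s₀
      rw [Metric.mem_ball, Real.dist_eq] at hs
      linarith
    rw [Real.norm_eq_abs, abs_mul]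
    calc |g' (r ω * s)| * |r ω| ≤ C * (1 + |r ω| * |s|) * |r ω| := by
          gcongr; simpa [abs_mul] using hg'_le (r ω * s)
      _ ≤ C * (1 + |r ω| * (|s₀| + 1)) * |r ω| := by gcongr
      _ = C * |r ω| + C * (|s₀| + 1) * r ω ^ 2 := by rw [← sq_abs (r ω)]; ring
  · exact ((hg (r ω * s)).comp s ((hasDerivAt_id s).const_mul (r ω))).congr_deriv (by simp)

lemma integrable_gaussQ_comp_mul (hr : Measurable r) (s : ℝ) :
    Integrable (fun ω => gaussQ (r ω * s)) P :=
  (integrable_const (1 : ℝ)).mono'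
    (continuous_gaussQ.measurable.comp (hr.mul_const s)).aestronglyMeasurable
    (Filter.Eventually.of_forall fun ω => by
      rw [Real.norm_eq_abs, abs_of_pos (gaussQ_pos _)]; exact gaussQ_le_one _)

lemma integrable_mul_gaussianPDFReal_comp_mul (hr : Measurable r)
    (hr2 : Integrable (fun ω => r ω ^ 2) P) (s : ℝ) :
    Integrable (fun ω => r ω * φ (r ω * s)) P :=
  (integrable_of_integrable_sq hr hr2).mul_bdd
    ((measurable_gaussianPDFReal 0 1).comp (hr.mul_const s)).aestronglyMeasurable
    (Filter.Eventually.of_forall fun ω => by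
      rw [Real.norm_eq_abs, abs_of_nonneg (gaussianPDFReal_nonneg 0 1 _)]
      exact gaussianPDFReal_zero_one_le_one _)

lemma integrable_gaussF_comp_mul (hr : Measurable r) (hr2 : Integrable (fun ω => r ω ^ 2) P)
    (s : ℝ) : Integrable (fun ω => gaussF (r ω * s)) P := by
  simp_rw [gaussF_mul_eq]
  exact ((integrable_gaussQ_comp_mul hr s).add
    ((integrable_sq_mul_gaussQ_comp_mul hr hr2 s).const_mul _)).sub
    ((integrable_mul_gaussianPDFReal_comp_mul hr hr2 s).const_mul _)

lemma integral_gaussF_comp_mul (hr : Measurable r) (hr2 : Integrable (fun ω => r ω ^ 2) P)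
    (s : ℝ) :
    ∫ ω, gaussF (r ω * s) ∂P = ∫ ω, gaussQ (r ω * s) ∂P
      + s ^ 2 * ∫ ω, r ω ^ 2 * gaussQ (r ω * s) ∂P - s * ∫ ω, r ω * φ (r ω * s) ∂P := by
  simp_rw [gaussF_mul_eq]
  rw [integral_sub, integral_add, integral_const_mul, integral_const_mul]
  · exact integrable_gaussQ_comp_mul hr s
  · exact (integrable_sq_mul_gaussQ_comp_mul hr hr2 s).const_mul _
  · exact (integrable_gaussQ_comp_mul hr s).add
      ((integrable_sq_mul_gaussQ_comp_mul hr hr2 s).const_mul _)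
  · exact (integrable_mul_gaussianPDFReal_comp_mul hr hr2 s).const_mul _

lemma hasDerivAt_integral_gaussQ_comp_mul (hr : Measurable r)
    (hr2 : Integrable (fun ω => r ω ^ 2) P) (s₀ : ℝ) :
    HasDerivAt (fun s => ∫ ω, gaussQ (r ω * s) ∂P) (-∫ ω, r ω * φ (r ω * s₀) ∂P) s₀ := by
  have h := hasDerivAt_integral_comp_mul hr hr2 hasDerivAt_gaussQ
    continuous_gaussianPDFReal_zero_one.neg (C := 1) (fun x => ?_)
    (integrable_gaussQ_comp_mul hr s₀)
  · convert h using 1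
    rw [← integral_neg]
    congr 1 with ω
    ring
  · rw [abs_neg, abs_of_nonneg (gaussianPDFReal_nonneg 0 1 _)]
    linarith [gaussianPDFReal_zero_one_le_one x, abs_nonneg x]

lemma hasDerivAt_integral_gaussF_comp_mul (hr : Measurable r)
    (hr2 : Integrable (fun ω => r ω ^ 2) P) (s₀ : ℝ) :
    HasDerivAt (fun s => ∫ ω, gaussF (r ω * s) ∂P)
      (2 * (s₀ * ∫ ω, r ω ^ 2 * gaussQ (r ω * s₀) ∂P - ∫ ω, r ω * φ (r ω * s₀) ∂P)) s₀ := by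
  have h := hasDerivAt_integral_comp_mul hr hr2 hasDerivAt_gaussF
    (continuous_const.mul ((continuous_id.mul continuous_gaussQ).sub
      continuous_gaussianPDFReal_zero_one)) (C := 2) (fun x => ?_)
    (integrable_gaussF_comp_mul hr hr2 s₀)
  · convert h using 1
    rw [← integral_const_mul, ← integral_sub
      ((integrable_sq_mul_gaussQ_comp_mul hr hr2 s₀).const_mul _)
      (integrable_mul_gaussianPDFReal_comp_mul hr hr2 s₀), ← integral_const_mul]
    congr 1 with ω
    ring
  · have hQ : |x * gaussQ x| ≤ |x| := by
      rw [abs_mul, abs_of_pos (gaussQ_pos x)]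
      exact mul_le_of_le_one_right (abs_nonneg x) (gaussQ_le_one x)
    rw [abs_mul, abs_two]
    gcongr
    calc |x * gaussQ x - φ x| ≤ |x * gaussQ x| + |φ x| := abs_sub _ _
      _ ≤ 1 + |x| := by
        rw [abs_of_nonneg (gaussianPDFReal_nonneg 0 1 _)]
        linarith [gaussianPDFReal_zero_one_le_one x]

end

lemma neg_mul_div_sub_lt {δ s A B : ℝ} (hδ : 0 < δ) (hs : s < 0) (hA : 0 ≤ A) (hB : 0 < B) :
    -A * (δ / (s * B - A)) < δ := by
  have hsBA : s * B - A < 0 := by nlinarith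
  rw [neg_mul, ← mul_div_assoc, neg_lt, lt_div_iff_of_neg hsBA]
  nlinarith [mul_pos (mul_pos hδ (neg_pos.2 hs)) hB]

/-- **Derivative of `γ`.** With `x(δ) = −1/σ(δ)`, where `σ(δ) > 0` solves
`δ² = E[f(r̄ x(δ))]`, and `γ(δ) = E[Q(r̄ x(δ))]`, one has
`γ′(δ) = −(δ x(δ)/(δ² − E[Q(r̄ x(δ))])) · E[r̄ e^{−(r̄ x(δ))²/2}]/√(2π)`,
and moreover `γ′(δ) < δ` for every `δ > 1/√2`. -/
theorem gamma_deriv_formula_and_bound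
    {Ω : Type} [MeasurableSpace Ω] (P : Measure Ω) [IsProbabilityMeasure P]
    (r : Ω → ℝ) (hrmeas : Measurable r)
    (hrpos : ∀ᵐ ω ∂P, 0 ≤ r ω)
    (hrmom : Integrable (fun ω => r ω ^ 2) P)
    (hrlaw : Measure.map r P ≠ Measure.dirac 0)
    (σfun : ℝ → ℝ)
    (hσpos : ∀ δ ∈ Set.Ioi (1 / Real.sqrt 2), 0 < σfun δ)
    (hσdiff : ∀ δ ∈ Set.Ioi (1 / Real.sqrt 2), DifferentiableAt ℝ σfun δ)
    (hσeq : ∀ δ ∈ Set.Ioi (1 / Real.sqrt 2),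
      δ ^ 2 = ∫ ω, gaussF (r ω * (-1 / σfun δ)) ∂P) :
    ∀ δ ∈ Set.Ioi (1 / Real.sqrt 2),
      HasDerivAt (fun t => ∫ ω, gaussQ (r ω * (-1 / σfun t)) ∂P)
        (-(δ * (-1 / σfun δ) / (δ ^ 2 - ∫ ω, gaussQ (r ω * (-1 / σfun δ)) ∂P))
          * ((∫ ω, r ω * Real.exp (-(r ω * (-1 / σfun δ)) ^ 2 / 2) ∂P)
              / Real.sqrt (2 * π))) δ
      ∧ -(δ * (-1 / σfun δ) / (δ ^ 2 - ∫ ω, gaussQ (r ω * (-1 / σfun δ)) ∂P))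
          * ((∫ ω, r ω * Real.exp (-(r ω * (-1 / σfun δ)) ^ 2 / 2) ∂P)
              / Real.sqrt (2 * π)) < δ := by
  intro δ hδ
  have hδpos : 0 < δ := lt_trans (by positivity) hδ
  obtain ⟨x', hx'⟩ : ∃ x', HasDerivAt (fun t => -1 / σfun t) x' δ :=
    ⟨_, ((differentiableAt_const _).div (hσdiff δ hδ) (hσpos δ hδ).ne').hasDerivAt⟩
  set s := -1 / σfun δ
  have hs : s < 0 := div_neg_of_neg_of_pos (by norm_num) (hσpos δ hδ)
  set A := ∫ ω, r ω * φ (r ω * s) ∂P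
  set B := ∫ ω, r ω ^ 2 * gaussQ (r ω * s) ∂P
  have hA : 0 ≤ A := integral_nonneg_of_ae <|
    hrpos.mono fun ω h => mul_nonneg h (gaussianPDFReal_nonneg 0 1 _)
  have hB : 0 < B := integral_sq_mul_gaussQ_comp_mul_pos (not_ae_eq_zero_of_map_ne_dirac hrlaw)
    (integrable_sq_mul_gaussQ_comp_mul hrmeas hrmom s)
  have hx'_val : x' = δ / (s * B - A) := by
    have hΦ := (hasDerivAt_integral_gaussF_comp_mul hrmeas hrmom s).comp δ hx'
    have hsq : HasDerivAt (fun t => t ^ 2) (2 * (s * B - A) * x') δ :=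
      hΦ.congr_of_eventuallyEq (Filter.eventually_of_mem (isOpen_Ioi.mem_nhds hδ) hσeq)
    have h2δ : 2 * (s * B - A) * x' = 2 * δ :=
      hsq.unique ((hasDerivAt_pow 2 δ).congr_deriv (by ring))
    rw [eq_div_iff (by nlinarith)]
    linarith
  have hγ : δ ^ 2 - ∫ ω, gaussQ (r ω * s) ∂P = s * (s * B - A) := by
    rw [hσeq δ hδ, integral_gaussF_comp_mul hrmeas hrmom]; ring
  have hval : -(δ * s / (δ ^ 2 - ∫ ω, gaussQ (r ω * s) ∂P))
      * ((∫ ω, r ω * Real.exp (-(r ω * s) ^ 2 / 2) ∂P) / Real.sqrt (2 * π)) = -A * x' := by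
    have hs0 : s ≠ 0 := hs.ne
    rw [← show A = _ from integral_mul_gaussianPDFReal_comp_mul s, hγ, hx'_val]
    field_simp
  rw [hval]
  have hΓ := (hasDerivAt_integral_gaussQ_comp_mul hrmeas hrmom s).comp δ hx'
  exact ⟨hΓ, hx'_val ▸ neg_mul_div_sub_lt hδpos hs hA hB⟩
end
end
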